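/- arXiv:2605.09706 — 4 statements merged into one kernel-verified Lean document; each statement's English description precedes it below -/
import Mathlib

section
/- For all t, β > 0 and every x ∈ ℝ³ \ {0}: ∫₀^∞ e^{4πβu} · u · e^{−(|x|+u)²/(4t)} du = √(πt) · (8πβt − |x|) · e^{−4πβ|x| + 16π²β²t} · erfc(|x|/(2√t) − 4πβ√t) + 2t · e^{−|x|²/(4t)}. -/
open MeasureTheory Real
open scoped Classical

noncomputable section

abbrev E3 : Type := EuclideanSpace ℝ (Fin 3)

/-- Radial three-dimensional free heat kernel `P_t(r) = (4πt)^{-3/2} exp(-r²/(4t))`. -/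
def heatR (t r : ℝ) : ℝ :=
  (4 * π * t) ^ (-(3 : ℝ) / 2) * Real.exp (-r ^ 2 / (4 * t))

/-- Three-dimensional free heat kernel `P_t(x,y) = (4πt)^{-3/2} exp(-|x-y|²/(4t))`. -/
def heatK (t : ℝ) (x y : E3) : ℝ :=
  (4 * π * t) ^ (-(3 : ℝ) / 2) * Real.exp (-‖x - y‖ ^ 2 / (4 * t))

/-- Three-dimensional attractive point interaction heat kernel `P_t^β(x,y)`. -/
def Pbeta (β t : ℝ) (x y : E3) : ℝ :=
  heatK t x y + 2 * t / (‖x‖ * ‖y‖) * heatR t (‖x‖ + ‖y‖)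
    + 8 * π * β * t / (‖x‖ * ‖y‖) *
        ∫ u in Set.Ioi (0 : ℝ), Real.exp (4 * π * β * u) * heatR t (u + ‖x‖ + ‖y‖)

/-- Mass excess function `Q_t^β(x)`, with `Q_0^β(x) := 0`. -/
def Qbeta (β t : ℝ) (x : E3) : ℝ :=
  if t = 0 then 0
  else
    (4 * π * β * ‖x‖ * Real.sqrt (π * t))⁻¹ *
      ∫ w in Set.Ioi (0 : ℝ),
        (Real.exp (4 * π * β * w) - 1) * Real.exp (-(‖x‖ + w) ^ 2 / (4 * t))

/-- Doob-transformed transition density `p_{s,t}^{T,β}(x,y)` (set to `0` at `y = 0`). -/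
def doobP (T β s t : ℝ) (x y : E3) : ℝ :=
  if y = 0 then 0
  else (1 + Qbeta β (T - t) y) / (1 + Qbeta β (T - s) x) * Pbeta β (t - s) x y

/-- Complementary error function `erfc(z) = (2/√π) ∫_z^∞ e^{-u²} du`. -/
def erfc (z : ℝ) : ℝ := 2 / Real.sqrt π * ∫ u in Set.Ioi z, Real.exp (-u ^ 2)

/-! Completing the square, `e^{bu} e^{-(r+u)²/4t} = e^{-br+b²t} e^{-(u+c)²/4t}` with
`c = r - 2bt`. After the shift `v = u + c` the first moment splits into `∫_c^∞ v e^{-v²/4t} dv`,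
which has the elementary antiderivative `-2t e^{-v²/4t}`, minus `c` times the Gaussian tail
`∫_c^∞ e^{-v²/4t} dv = √(πt) erfc(c/(2√t))`. -/

open Set Filter Topology

theorem integral_Ioi_comp_add_right {E : Type*} [NormedAddCommGroup E] [NormedSpace ℝ E]
    (f : ℝ → E) (a c : ℝ) : ∫ u in Ioi a, f (u + c) = ∫ u in Ioi (a + c), f u := by
  have hpre : (· + c) ⁻¹' Ioi (a + c) = Ioi a := by ext u; simp
  simpa [hpre] using (measurePreserving_add_right volume c).setIntegral_preimage_emb
    (MeasurableEquiv.addRight c).measurableEmbedding f (Ioi (a + c))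

section HeatGaussian

variable {t : ℝ}

theorem exp_neg_sq_div_eq_exp_neg_mul_sq (v : ℝ) :
    exp (-v ^ 2 / (4 * t)) = exp (-(1 / (4 * t)) * v ^ 2) := by
  ring_nf

theorem integrable_exp_neg_sq_div (ht : 0 < t) :
    Integrable fun v : ℝ ↦ exp (-v ^ 2 / (4 * t)) := by
  simpa only [exp_neg_sq_div_eq_exp_neg_mul_sq] using
    integrable_exp_neg_mul_sq (b := 1 / (4 * t)) (by positivity)

theorem integrable_mul_exp_neg_sq_div (ht : 0 < t) :
    Integrable fun v : ℝ ↦ v * exp (-v ^ 2 / (4 * t)) := by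
  simpa only [exp_neg_sq_div_eq_exp_neg_mul_sq] using
    integrable_mul_exp_neg_mul_sq (b := 1 / (4 * t)) (by positivity)

theorem integral_Ioi_exp_neg_sq_div (ht : 0 < t) (c : ℝ) :
    ∫ v in Ioi c, exp (-v ^ 2 / (4 * t)) = √(π * t) * erfc (c / (2 * √t)) := by
  have hs : 0 < 2 * √t := by positivity
  have hsq : (2 * √t) ^ 2 = 4 * t := by rw [mul_pow, sq_sqrt ht.le]; norm_num
  have hscale : ∀ v : ℝ, exp (-v ^ 2 / (4 * t)) = exp (-(v * (2 * √t)⁻¹) ^ 2) := fun v ↦ by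
    rw [mul_pow, inv_pow, hsq, neg_div, div_eq_mul_inv]
  simp_rw [hscale]
  rw [integral_comp_mul_right_Ioi (fun v ↦ exp (-v ^ 2)) c (inv_pos.2 hs), erfc, smul_eq_mul,
    inv_inv, ← div_eq_mul_inv, sqrt_mul pi_pos.le]
  field_simp

theorem hasDerivAt_exp_neg_sq_div (ht : t ≠ 0) (v : ℝ) :
    HasDerivAt (fun v ↦ -(2 * t) * exp (-v ^ 2 / (4 * t))) (v * exp (-v ^ 2 / (4 * t))) v := by
  have hexponent : HasDerivAt (fun v ↦ -v ^ 2 / (4 * t)) (-(2 * v) / (4 * t)) v := by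
    simpa using (hasDerivAt_pow 2 v).neg.div_const (4 * t)
  refine (hexponent.exp.const_mul (-(2 * t))).congr_deriv ?_
  field_simp
  ring

theorem tendsto_exp_neg_sq_div_atTop (ht : 0 < t) :
    Tendsto (fun v : ℝ ↦ exp (-v ^ 2 / (4 * t))) atTop (𝓝 0) :=
  tendsto_exp_atBot.comp <|
    (tendsto_neg_atTop_atBot.comp (tendsto_pow_atTop two_ne_zero)).atBot_div_const (by positivity)

theorem integral_Ioi_mul_exp_neg_sq_div (ht : 0 < t) (c : ℝ) :
    ∫ v in Ioi c, v * exp (-v ^ 2 / (4 * t)) = 2 * t * exp (-c ^ 2 / (4 * t)) := by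
  have hlim := (tendsto_exp_neg_sq_div_atTop ht).const_mul (-(2 * t))
  rw [mul_zero] at hlim
  rw [integral_Ioi_of_hasDerivAt_of_tendsto' (fun v _ ↦ hasDerivAt_exp_neg_sq_div ht.ne' v)
    (integrable_mul_exp_neg_sq_div ht).integrableOn hlim]
  ring

theorem integral_Ioi_zero_mul_exp_neg_add_sq_div (ht : 0 < t) (c : ℝ) :
    ∫ u in Ioi (0 : ℝ), u * exp (-(u + c) ^ 2 / (4 * t))
      = 2 * t * exp (-c ^ 2 / (4 * t)) - c * (√(π * t) * erfc (c / (2 * √t))) := by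
  have hshift := integral_Ioi_comp_add_right (fun v ↦ (v - c) * exp (-v ^ 2 / (4 * t))) 0 c
  simp only [add_sub_cancel_right, zero_add, sub_mul] at hshift
  rw [hshift, integral_sub (integrable_mul_exp_neg_sq_div ht).integrableOn
      ((integrable_exp_neg_sq_div ht).integrableOn.const_mul c),
    integral_const_mul, integral_Ioi_mul_exp_neg_sq_div ht, integral_Ioi_exp_neg_sq_div ht]

theorem exp_mul_mul_exp_neg_sq_div (ht : t ≠ 0) (b r u : ℝ) :
    exp (b * u) * u * exp (-(r + u) ^ 2 / (4 * t))
      = exp (-(b * r) + b ^ 2 * t) * (u * exp (-(u + (r - 2 * b * t)) ^ 2 / (4 * t))) := by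
  rw [mul_comm (exp _) u, mul_assoc, ← exp_add, mul_left_comm, ← exp_add]
  congr 2
  field_simp
  ring

theorem integral_Ioi_exp_mul_mul_exp_neg_sq_div (ht : 0 < t) (b r : ℝ) :
    ∫ u in Ioi (0 : ℝ), exp (b * u) * u * exp (-(r + u) ^ 2 / (4 * t))
      = √(π * t) * (2 * b * t - r) * exp (-(b * r) + b ^ 2 * t)
            * erfc (r / (2 * √t) - b * √t)
        + 2 * t * exp (-r ^ 2 / (4 * t)) := by
  have herfc : (r - 2 * b * t) / (2 * √t) = r / (2 * √t) - b * √t := by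
    field_simp
    rw [sq_sqrt ht.le]
  have hexp : exp (-(b * r) + b ^ 2 * t) * exp (-(r - 2 * b * t) ^ 2 / (4 * t))
      = exp (-r ^ 2 / (4 * t)) := by
    rw [← exp_add]
    congr 1
    field_simp
    ring
  simp_rw [exp_mul_mul_exp_neg_sq_div ht.ne']
  rw [integral_const_mul, integral_Ioi_zero_mul_exp_neg_add_sq_div ht, herfc, mul_sub,
    mul_left_comm, hexp]
  ring

end HeatGaussian

theorem laplace_gaussian_moment_general (t β : ℝ) (ht : 0 < t)
    (x : E3) :
    ∫ u in Set.Ioi (0 : ℝ),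
        Real.exp (4 * π * β * u) * u * Real.exp (-(‖x‖ + u) ^ 2 / (4 * t))
      = Real.sqrt (π * t) * (8 * π * β * t - ‖x‖)
            * Real.exp (-(4 * π * β * ‖x‖) + 16 * π ^ 2 * β ^ 2 * t)
            * erfc (‖x‖ / (2 * Real.sqrt t) - 4 * π * β * Real.sqrt t)
        + 2 * t * Real.exp (-‖x‖ ^ 2 / (4 * t)) := by
  rw [integral_Ioi_exp_mul_mul_exp_neg_sq_div ht]
  ring_nf

theorem laplace_gaussian_moment (t β : ℝ) (ht : 0 < t) (hβ : 0 < β)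
    (x : E3) (hx : x ≠ 0) :
    ∫ u in Set.Ioi (0 : ℝ),
        Real.exp (4 * π * β * u) * u * Real.exp (-(‖x‖ + u) ^ 2 / (4 * t))
      = Real.sqrt (π * t) * (8 * π * β * t - ‖x‖)
            * Real.exp (-(4 * π * β * ‖x‖) + 16 * π ^ 2 * β ^ 2 * t)
            * erfc (‖x‖ / (2 * Real.sqrt t) - 4 * π * β * Real.sqrt t)
        + 2 * t * Real.exp (-‖x‖ ^ 2 / (4 * t)) :=
  laplace_gaussian_moment_general t β ht x

end
end

section
/- Total mass of the attractive point interaction heat kernel: for all t, β > 0 and every x ∈ ℝ³ \ {0}, ∫_{ℝ³} P_t^β(x,y) dy = 1 + (1/(4πβ|x|)) · [ e^{−4πβ|x| + 16π²β²t} · erfc(|x|/(2√t) − 4πβ√t) − erfc(|x|/(2√t)) ]. -/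
open MeasureTheory Real
open scoped Classical

noncomputable section

/-! Split `P_t^β(x,·)` into the free heat kernel, of mass one, and a radial part. In polar
coordinates, with `g w = P_t(|x| + w)` and `b = 4πβ`, the mass of the radial part is
`(2t/|x|) · 4π ∫_0^∞ r (g r + b ∫_0^∞ e^{bu} g (r + u) du) dr`, and Tonelli (all integrands are
nonnegative, so we work with lower integrals) turns the `r`-integral into
`∫_0^∞ (e^{bw} - 1)/b · g w dw`. Completing the square in the Gaussian gives the two `erfc`
terms. -/

open Set
open scoped ENNReal

lemma lintegral_Ioi_comp_const_add (F : ℝ → ℝ≥0∞) (c a : ℝ) :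
    ∫⁻ v in Ioi a, F (c + v) = ∫⁻ w in Ioi (c + a), F w := by
  have hpre : (c + ·) ⁻¹' Ioi (c + a) = Ioi a := by ext v; simp
  rw [← hpre]
  exact (measurePreserving_add_left volume c).setLIntegral_comp_preimage_emb
    (measurableEmbedding_addLeft c) F _

lemma lintegral_Ioi_mul_lintegral_Ioi {f h : ℝ → ℝ≥0∞} (hf : Measurable f) (hh : Measurable h) :
    ∫⁻ u in Ioi 0, h u * ∫⁻ w in Ioi u, f w = ∫⁻ w in Ioi 0, f w * ∫⁻ u in Ioo 0 w, h u := by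
  have hjoint : Measurable fun p : ℝ × ℝ =>
      h p.1 * {q : ℝ × ℝ | q.1 < q.2}.indicator (f ∘ Prod.snd) p :=
    (hh.comp measurable_fst).mul
      ((hf.comp measurable_snd).indicator (measurableSet_lt measurable_fst measurable_snd))
  calc ∫⁻ u in Ioi 0, h u * ∫⁻ w in Ioi u, f w
      = ∫⁻ u in Ioi 0, ∫⁻ w in Ioi 0, h u * (Ioi u).indicator f w := by
        refine setLIntegral_congr_fun measurableSet_Ioi fun u hu => ?_
        rw [lintegral_const_mul _ (hf.indicator measurableSet_Ioi),
          lintegral_indicator measurableSet_Ioi, Measure.restrict_restrict measurableSet_Ioi,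
          inter_eq_left.2 (Ioi_subset_Ioi (le_of_lt hu))]
    _ = ∫⁻ w in Ioi 0, ∫⁻ u in Ioi 0, h u * (Ioi u).indicator f w :=
        lintegral_lintegral_swap (hjoint.aemeasurable.congr (.of_forall fun p => by
          by_cases hp : p.1 < p.2 <;> simp [indicator, hp, Function.uncurry]))
    _ = ∫⁻ w in Ioi 0, f w * ∫⁻ u in Ioo 0 w, h u := by
        refine setLIntegral_congr_fun measurableSet_Ioi fun w _ => ?_
        have : (fun u => h u * (Ioi u).indicator f w) = fun u => (Iio w).indicator h u * f w := by
          ext u; by_cases hu : u < w <;> simp [indicator, hu]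
        rw [this, lintegral_mul_const _ (hh.indicator measurableSet_Iio),
          lintegral_indicator measurableSet_Iio, Measure.restrict_restrict measurableSet_Iio,
          Iio_inter_Ioi, mul_comm]

lemma lintegral_Ioi_ofReal_mul {f : ℝ → ℝ≥0∞} (hf : Measurable f) :
    ∫⁻ r in Ioi 0, ENNReal.ofReal r * f r = ∫⁻ p in Ioi 0, ∫⁻ w in Ioi p, f w := by
  have := lintegral_Ioi_mul_lintegral_Ioi hf (measurable_const (a := (1 : ℝ≥0∞)))
  simp only [one_mul, lintegral_one, Measure.restrict_apply_univ, Real.volume_Ioo, sub_zero] at this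
  rw [this]
  exact setLIntegral_congr_fun measurableSet_Ioi fun r _ => mul_comm _ _

lemma lintegral_Ioo_exp_mul {b q : ℝ} (hb : 0 < b) (hq : 0 ≤ q) :
    ∫⁻ u in Ioo 0 q, ENNReal.ofReal (exp (b * u)) = ENNReal.ofReal ((exp (b * q) - 1) / b) := by
  have hint : IntegrableOn (fun u => exp (b * u)) (Ioo 0 q) :=
    (continuous_exp.comp (continuous_const_mul b)).integrableOn_Icc.mono_set Ioo_subset_Icc_self
  rw [← ofReal_integral_eq_lintegral_ofReal hint (.of_forall fun u => (exp_pos _).le),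
    ← integral_Ioc_eq_integral_Ioo, ← intervalIntegral.integral_of_le hq,
    intervalIntegral.integral_comp_mul_left (fun u => exp u) hb.ne', integral_exp]
  simp [div_eq_inv_mul]

lemma one_add_ofReal_mul_exp_sub_one_div {b q : ℝ} (hb : 0 < b) (hq : 0 ≤ q) :
    1 + ENNReal.ofReal b * ENNReal.ofReal ((exp (b * q) - 1) / b)
      = ENNReal.ofReal (exp (b * q)) := by
  have : 0 ≤ exp (b * q) - 1 := by linarith [one_le_exp (mul_nonneg hb.le hq)]
  rw [← ENNReal.ofReal_mul hb.le, mul_div_cancel₀ _ hb.ne', ← ENNReal.ofReal_one,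
    ← ENNReal.ofReal_add zero_le_one this, add_sub_cancel]

lemma exp_mul_sub_one_div_nonneg {b w : ℝ} (hb : 0 < b) (hw : 0 ≤ w) :
    0 ≤ (exp (b * w) - 1) / b :=
  div_nonneg (sub_nonneg.2 (one_le_exp (mul_nonneg hb.le hw))) hb.le

-- With `Φ s = ∫_{w>s} g w`, both sides equal `∫_{q>0} e^{bq} Φ q`.
lemma lintegral_Ioi_ofReal_mul_add_exp_convolution {g : ℝ → ℝ≥0∞} (hg : Measurable g) {b : ℝ}
    (hb : 0 < b) :
    ∫⁻ r in Ioi 0, ENNReal.ofReal r *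
        (g r + ENNReal.ofReal b * ∫⁻ u in Ioi 0, ENNReal.ofReal (exp (b * u)) * g (r + u))
      = ∫⁻ w in Ioi 0, ENNReal.ofReal ((exp (b * w) - 1) / b) * g w := by
  set Φ : ℝ → ℝ≥0∞ := fun s => ∫⁻ w in Ioi s, g w
  set e : ℝ → ℝ≥0∞ := fun u => ENNReal.ofReal (exp (b * u))
  have hΦ : Measurable Φ :=
    Antitone.measurable fun s s' hss' => lintegral_mono_set (Ioi_subset_Ioi hss')
  have he : Measurable e := by fun_prop
  have hprimitive : ∀ q ∈ Ioi (0 : ℝ),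
      ∫⁻ u in Ioo 0 q, e u = ENNReal.ofReal ((exp (b * q) - 1) / b) :=
    fun q hq => lintegral_Ioo_exp_mul hb (le_of_lt hq)
  have hconv : ∫⁻ r in Ioi 0, ENNReal.ofReal r * ∫⁻ u in Ioi 0, e u * g (r + u)
      = ∫⁻ q in Ioi 0, Φ q * ENNReal.ofReal ((exp (b * q) - 1) / b) := calc
    _ = ∫⁻ u in Ioi 0, ∫⁻ r in Ioi 0, ENNReal.ofReal r * (e u * g (r + u)) := by
        simp_rw [← lintegral_const_mul' _ _ ENNReal.ofReal_ne_top]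
        exact lintegral_lintegral_swap (by fun_prop)
    _ = ∫⁻ u in Ioi 0, e u * ∫⁻ q in Ioi u, Φ q := by
        refine lintegral_congr fun u => ?_
        simp_rw [mul_left_comm _ (e u), add_comm _ u]
        have hshift := lintegral_Ioi_comp_const_add Φ u 0
        rw [add_zero] at hshift
        rw [lintegral_const_mul' _ _ ENNReal.ofReal_ne_top,
          lintegral_Ioi_ofReal_mul (f := fun r => g (u + r)) (by fun_prop), ← hshift]
        simp only [Φ, e, lintegral_Ioi_comp_const_add g]
    _ = _ := by
        rw [lintegral_Ioi_mul_lintegral_Ioi hΦ he]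
        exact setLIntegral_congr_fun measurableSet_Ioi fun q hq => by rw [hprimitive q hq]
  calc _ = ∫⁻ q in Ioi 0,
          Φ q * (1 + ENNReal.ofReal b * ENNReal.ofReal ((exp (b * q) - 1) / b)) := by
        have hsplit : ∀ r,
            ENNReal.ofReal r * (g r + ENNReal.ofReal b * ∫⁻ u in Ioi 0, e u * g (r + u))
              = ENNReal.ofReal r * g r
              + ENNReal.ofReal b * (ENNReal.ofReal r * ∫⁻ u in Ioi 0, e u * g (r + u)) :=
          fun r => by ring
        rw [lintegral_congr hsplit]
        simp_rw [mul_add]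
        rw [lintegral_add_left (by fun_prop), lintegral_Ioi_ofReal_mul hg,
          lintegral_const_mul' _ _ ENNReal.ofReal_ne_top, hconv,
          ← lintegral_const_mul' _ _ ENNReal.ofReal_ne_top, ← lintegral_add_left hΦ]
        refine lintegral_congr fun q => ?_
        ring
    _ = ∫⁻ q in Ioi 0, e q * Φ q :=
        setLIntegral_congr_fun measurableSet_Ioi fun q hq => by
          rw [one_add_ofReal_mul_exp_sub_one_div hb (le_of_lt hq), mul_comm]
    _ = _ := by
        rw [lintegral_Ioi_mul_lintegral_Ioi hg he]
        exact setLIntegral_congr_fun measurableSet_Ioi fun w hw => by rw [hprimitive w hw, mul_comm]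

section Gaussian

variable {t : ℝ}

lemma integral_Ioi_comp_const_add (f : ℝ → ℝ) (c : ℝ) :
    ∫ w in Ioi 0, f (c + w) = ∫ s in Ioi c, f s := by
  have hpre : (c + ·) ⁻¹' Ioi c = Ioi 0 := by ext v; simp
  rw [← hpre]
  exact (measurePreserving_add_left volume c).setIntegral_preimage_emb
    (measurableEmbedding_addLeft c) f _

lemma integral_Ioi_exp_neg_add_sq (ht : 0 < t) (c : ℝ) :
    ∫ w in Ioi 0, exp (-(c + w) ^ 2 / (4 * t)) = √(π * t) * erfc (c / (2 * √t)) := by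
  have hs : 0 < 2 * √t := by positivity
  have hscale : ∀ x, exp (-(2 * √t * x) ^ 2 / (4 * t)) = exp (-x ^ 2) := fun x => by
    rw [mul_pow, mul_pow, sq_sqrt ht.le]
    field_simp
    ring_nf
  have := integral_comp_mul_left_Ioi' (fun s => exp (-s ^ 2 / (4 * t))) (c / (2 * √t)) hs
  simp only [hscale, mul_div_cancel₀ _ hs.ne', smul_eq_mul] at this
  rw [integral_Ioi_comp_const_add (fun s => exp (-s ^ 2 / (4 * t))), ← this, erfc,
    sqrt_mul pi_pos.le]
  field_simp

lemma integrable_exp_neg_add_sq (ht : 0 < t) (c : ℝ) :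
    Integrable fun w => exp (-(c + w) ^ 2 / (4 * t)) := by
  have h := (integrable_exp_neg_mul_sq (b := 1 / (4 * t)) (by positivity)).comp_add_left c
  refine h.congr (.of_forall fun w => congrArg exp ?_)
  ring

lemma exp_mul_mul_exp_neg_add_sq (ht : t ≠ 0) (b c u : ℝ) :
    exp (b * u) * exp (-(c + u) ^ 2 / (4 * t))
      = exp (b ^ 2 * t - b * c) * exp (-((c - 2 * b * t) + u) ^ 2 / (4 * t)) := by
  rw [← exp_add, ← exp_add]
  congr 1
  field_simp
  ring

lemma integrable_exp_mul_mul_exp_neg_add_sq (ht : 0 < t) (b c : ℝ) :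
    Integrable fun u => exp (b * u) * exp (-(c + u) ^ 2 / (4 * t)) := by
  simp_rw [exp_mul_mul_exp_neg_add_sq ht.ne']
  exact (integrable_exp_neg_add_sq ht _).const_mul _

lemma integral_Ioi_exp_mul_mul_exp_neg_add_sq (ht : 0 < t) (b c : ℝ) :
    ∫ u in Ioi 0, exp (b * u) * exp (-(c + u) ^ 2 / (4 * t))
      = exp (b ^ 2 * t - b * c) * (√(π * t) * erfc ((c - 2 * b * t) / (2 * √t))) := by
  simp_rw [exp_mul_mul_exp_neg_add_sq ht.ne']
  rw [integral_const_mul, integral_Ioi_exp_neg_add_sq ht]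

end Gaussian

section HeatKernel

variable {t : ℝ}

lemma heatR_eq_exp_div (ht : 0 < t) (r : ℝ) :
    heatR t r = exp (-r ^ 2 / (4 * t)) / (8 * π * t * √(π * t)) := by
  have h32 : (4 * π * t) ^ ((3 : ℝ) / 2) = 8 * π * t * √(π * t) := by
    rw [show (3 : ℝ) / 2 = 1 + 1 / 2 by norm_num, rpow_add (by positivity), rpow_one,
      ← sqrt_eq_rpow, show 4 * π * t = 2 ^ 2 * (π * t) by ring, sqrt_mul (by positivity),
      sqrt_sq zero_le_two]
    ring
  rw [heatR, neg_div (2 : ℝ) 3, rpow_neg (by positivity), h32, inv_mul_eq_div]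

lemma heatR_nonneg (ht : 0 ≤ t) (r : ℝ) : 0 ≤ heatR t r := by
  unfold heatR
  positivity

lemma heatK_eq_mul_exp_neg_mul_sq_norm (t : ℝ) (x y : E3) :
    heatK t x y = (4 * π * t) ^ (-(3 : ℝ) / 2) * exp (-(1 / (4 * t)) * ‖y - x‖ ^ 2) := by
  rw [heatK, norm_sub_rev]
  ring_nf

lemma integral_heatK (ht : 0 < t) (x : E3) : ∫ y, heatK t x y = 1 := by
  simp_rw [heatK_eq_mul_exp_neg_mul_sq_norm]
  rw [integral_const_mul, integral_sub_right_eq_self (fun v : E3 => exp (-(1 / (4 * t)) * ‖v‖ ^ 2)),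
    GaussianFourier.integral_rexp_neg_mul_sq_norm (by positivity), finrank_euclideanSpace_fin,
    show π / (1 / (4 * t)) = 4 * π * t by field_simp, ← rpow_add (by positivity)]
  norm_num

lemma integrable_heatK (ht : 0 < t) (x : E3) : Integrable (heatK t x) :=
  .of_integral_ne_zero (by rw [integral_heatK ht x]; exact one_ne_zero)

lemma integrable_heatR_const_add (ht : 0 < t) (a : ℝ) : Integrable fun w => heatR t (a + w) := by
  simp_rw [heatR]
  exact (integrable_exp_neg_add_sq ht a).const_mul _

lemma integrable_exp_mul_mul_heatR_const_add (ht : 0 < t) (b a : ℝ) :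
    Integrable fun w => exp (b * w) * heatR t (a + w) := by
  simp_rw [heatR, mul_left_comm (exp _)]
  exact (integrable_exp_mul_mul_exp_neg_add_sq ht b a).const_mul _

lemma integral_Ioi_heatR_const_add (ht : 0 < t) (a : ℝ) :
    8 * π * t * ∫ w in Ioi 0, heatR t (a + w) = erfc (a / (2 * √t)) := by
  have : 0 < √(π * t) := by positivity
  simp_rw [heatR_eq_exp_div ht]
  rw [integral_div, integral_Ioi_exp_neg_add_sq ht]
  field_simp

lemma integral_Ioi_exp_mul_mul_heatR_const_add (ht : 0 < t) (b a : ℝ) :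
    8 * π * t * ∫ w in Ioi 0, exp (b * w) * heatR t (a + w)
      = exp (b ^ 2 * t - b * a) * erfc ((a - 2 * b * t) / (2 * √t)) := by
  have : 0 < √(π * t) := by positivity
  simp_rw [heatR_eq_exp_div ht, mul_div_assoc']
  rw [integral_div, integral_Ioi_exp_mul_mul_exp_neg_add_sq ht]
  field_simp

lemma integral_Ioi_exp_sub_one_div_mul_heatR_const_add (ht : 0 < t) (b a : ℝ) :
    8 * π * t * ∫ w in Ioi 0, (exp (b * w) - 1) / b * heatR t (a + w)
      = (exp (b ^ 2 * t - b * a) * erfc ((a - 2 * b * t) / (2 * √t))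
          - erfc (a / (2 * √t))) / b := by
  have hR := integrable_heatR_const_add ht a
  have hER := integrable_exp_mul_mul_heatR_const_add ht b a
  simp_rw [sub_div, sub_mul, div_mul_eq_mul_div, one_mul]
  rw [integral_sub (hER.div_const b).integrableOn (hR.div_const b).integrableOn, integral_div,
    integral_div, mul_sub, mul_div_assoc', mul_div_assoc', integral_Ioi_heatR_const_add ht,
    integral_Ioi_exp_mul_mul_heatR_const_add ht, sub_div]

end HeatKernel

lemma lintegral_fun_norm_addHaar {E : Type*} [NormedAddCommGroup E] [NormedSpace ℝ E]
    [MeasurableSpace E] [BorelSpace E] [Nontrivial E] [FiniteDimensional ℝ E]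
    (μ : Measure E) [μ.IsAddHaarMeasure] {f : ℝ → ℝ≥0∞} (hf : Measurable f) :
    ∫⁻ x, f ‖x‖ ∂μ = Module.finrank ℝ E * μ (Metric.ball 0 1) *
      ∫⁻ y in Ioi (0 : ℝ), ENNReal.ofReal (y ^ (Module.finrank ℝ E - 1)) * f y := by
  have hmeas : Measurable fun p : Metric.sphere (0 : E) 1 × Ioi (0 : ℝ) => f p.2 :=
    (hf.comp measurable_subtype_coe).comp measurable_snd
  calc ∫⁻ x, f ‖x‖ ∂μ = ∫⁻ x : ({(0)}ᶜ : Set E), f ‖x.1‖ ∂(μ.comap (↑)) := by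
        rw [lintegral_subtype_comap (measurableSet_singleton _).compl fun x => f ‖x‖,
          restrict_compl_singleton]
    _ = ∫⁻ p : Metric.sphere (0 : E) 1 × Ioi (0 : ℝ), f p.2
          ∂(μ.toSphere.prod (.volumeIoiPow (Module.finrank ℝ E - 1))) := by
        rw [← μ.measurePreserving_homeomorphUnitSphereProd.lintegral_comp hmeas]
        simp
    _ = μ.toSphere univ * ∫⁻ r : Ioi (0 : ℝ), f r
          ∂(Measure.volumeIoiPow (Module.finrank ℝ E - 1)) := by
        rw [lintegral_prod _ hmeas.aemeasurable]
        simp [lintegral_const, mul_comm]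
    _ = _ := by
        rw [Measure.toSphere_apply_univ, Measure.volumeIoiPow,
          lintegral_withDensity_eq_lintegral_mul _ (by fun_prop)
            (show Measurable fun r : Ioi (0 : ℝ) => f r from hf.comp measurable_subtype_coe)]
        exact congrArg _ (lintegral_subtype_comap measurableSet_Ioi
          fun y => ENNReal.ofReal (y ^ (Module.finrank ℝ E - 1)) * f y)

lemma lintegral_fun_norm_E3 {f : ℝ → ℝ≥0∞} (hf : Measurable f) :
    ∫⁻ y : E3, f ‖y‖ = ENNReal.ofReal (4 * π) * ∫⁻ r in Ioi 0, ENNReal.ofReal (r ^ 2) * f r := by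
  rw [lintegral_fun_norm_addHaar volume hf, finrank_euclideanSpace_fin,
    EuclideanSpace.volume_ball_fin_three]
  congr 1
  rw [ENNReal.ofReal_one, one_pow, one_mul, show ((3 : ℕ) : ℝ≥0∞) = ENNReal.ofReal 3 by simp,
    ← ENNReal.ofReal_mul zero_le_three]
  ring_nf

def pbetaRadial (β t a r : ℝ) : ℝ :=
  2 * t / (a * r) * heatR t (a + r)
    + 8 * π * β * t / (a * r) * ∫ u in Ioi (0 : ℝ), exp (4 * π * β * u) * heatR t (u + a + r)

lemma Pbeta_eq_heatK_add_pbetaRadial (β t : ℝ) (x y : E3) :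
    Pbeta β t x y = heatK t x y + pbetaRadial β t ‖x‖ ‖y‖ := by
  rw [Pbeta, pbetaRadial, add_assoc]

section Radial

variable {β t a : ℝ}

lemma measurable_pbetaRadial : Measurable (pbetaRadial β t a) := by
  have hinner : Measurable fun r => ∫ u in Ioi (0 : ℝ), exp (4 * π * β * u) * heatR t (u + a + r) :=
    (StronglyMeasurable.integral_prod_right'
      (f := fun p : ℝ × ℝ => exp (4 * π * β * p.2) * heatR t (p.2 + a + p.1))
      (by unfold heatR; fun_prop)).measurable
  unfold pbetaRadial heatR
  fun_prop

lemma pbetaRadial_nonneg (hβ : 0 ≤ β) (ht : 0 ≤ t) (ha : 0 ≤ a) {r : ℝ} (hr : 0 ≤ r) :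
    0 ≤ pbetaRadial β t a r := by
  have : 0 ≤ ∫ u in Ioi (0 : ℝ), exp (4 * π * β * u) * heatR t (u + a + r) :=
    setIntegral_nonneg measurableSet_Ioi fun u _ => mul_nonneg (exp_pos _).le (heatR_nonneg ht _)
  have := heatR_nonneg ht (a + r)
  unfold pbetaRadial
  positivity

lemma ofReal_sq_mul_pbetaRadial (hβ : 0 < β) (ht : 0 < t) (ha : 0 < a) {r : ℝ} (hr : 0 < r) :
    ENNReal.ofReal (r ^ 2) * ENNReal.ofReal (pbetaRadial β t a r)
      = ENNReal.ofReal (2 * t / a) * (ENNReal.ofReal r * (ENNReal.ofReal (heatR t (a + r))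
        + ENNReal.ofReal (4 * π * β) * ∫⁻ u in Ioi 0,
            ENNReal.ofReal (exp (4 * π * β * u)) * ENNReal.ofReal (heatR t (a + (r + u))))) := by
  have hint : Integrable fun u => exp (4 * π * β * u) * heatR t (a + r + u) :=
    integrable_exp_mul_mul_heatR_const_add ht _ _
  have hnonneg : 0 ≤ ∫ u in Ioi (0 : ℝ), exp (4 * π * β * u) * heatR t (a + r + u) :=
    setIntegral_nonneg measurableSet_Ioi fun u _ => mul_nonneg (exp_pos _).le (heatR_nonneg ht.le _)
  have hreal : r ^ 2 * pbetaRadial β t a r = 2 * t / a * (r * (heatR t (a + r)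
      + 4 * π * β * ∫ u in Ioi (0 : ℝ), exp (4 * π * β * u) * heatR t (a + r + u))) := by
    have hshift : ∀ u, heatR t (u + a + r) = heatR t (a + r + u) := fun u => by ring_nf
    simp_rw [pbetaRadial, hshift]
    field_simp
    ring
  rw [← ENNReal.ofReal_mul (by positivity), hreal, ENNReal.ofReal_mul (by positivity),
    ENNReal.ofReal_mul hr.le, ENNReal.ofReal_add (heatR_nonneg ht.le _) (by positivity),
    ENNReal.ofReal_mul (by positivity),
    ofReal_integral_eq_lintegral_ofReal hint.integrableOn
      (.of_forall fun u => mul_nonneg (exp_pos _).le (heatR_nonneg ht.le _))]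
  simp_rw [ENNReal.ofReal_mul (exp_pos _).le, add_assoc]

lemma lintegral_ofReal_pbetaRadial_norm (hβ : 0 < β) (ht : 0 < t) (ha : 0 < a) :
    ∫⁻ y : E3, ENNReal.ofReal (pbetaRadial β t a ‖y‖) = ENNReal.ofReal (8 * π * t / a *
      ∫ w in Ioi 0, (exp (4 * π * β * w) - 1) / (4 * π * β) * heatR t (a + w)) := by
  have hb : 0 < 4 * π * β := by positivity
  have hint : Integrable fun w => (exp (4 * π * β * w) - 1) / (4 * π * β) * heatR t (a + w) := by
    simp_rw [sub_div, sub_mul, div_mul_eq_mul_div, one_mul]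
    exact ((integrable_exp_mul_mul_heatR_const_add ht _ a).div_const _).sub
      ((integrable_heatR_const_add ht a).div_const _)
  have hweight : ∀ w ∈ Ioi (0 : ℝ), 0 ≤ (exp (4 * π * β * w) - 1) / (4 * π * β) := fun w hw =>
    exp_mul_sub_one_div_nonneg hb (le_of_lt hw)
  rw [lintegral_fun_norm_E3 (f := fun r => ENNReal.ofReal (pbetaRadial β t a r))
      measurable_pbetaRadial.ennreal_ofReal,
    setLIntegral_congr_fun measurableSet_Ioi fun r hr => ofReal_sq_mul_pbetaRadial hβ ht ha hr,
    lintegral_const_mul' _ _ ENNReal.ofReal_ne_top,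
    lintegral_Ioi_ofReal_mul_add_exp_convolution (g := fun w => ENNReal.ofReal (heatR t (a + w)))
      (by unfold heatR; fun_prop) hb, ← mul_assoc, ← ENNReal.ofReal_mul (by positivity),
    setLIntegral_congr_fun measurableSet_Ioi fun w hw => (ENNReal.ofReal_mul (hweight w hw)).symm,
    ← ofReal_integral_eq_lintegral_ofReal hint.integrableOn
      (ae_restrict_of_forall_mem measurableSet_Ioi fun w hw =>
        mul_nonneg (hweight w hw) (heatR_nonneg ht.le _)),
    ← ENNReal.ofReal_mul (by positivity)]
  congr 1
  ring

lemma integrable_pbetaRadial_norm (hβ : 0 < β) (ht : 0 < t) (ha : 0 < a) :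
    Integrable fun y : E3 => pbetaRadial β t a ‖y‖ :=
  ⟨(measurable_pbetaRadial.comp measurable_norm).aestronglyMeasurable,
    (hasFiniteIntegral_iff_ofReal
      (.of_forall fun y => pbetaRadial_nonneg hβ.le ht.le ha.le (norm_nonneg y))).2
      (by rw [lintegral_ofReal_pbetaRadial_norm hβ ht ha]; exact ENNReal.ofReal_lt_top)⟩

lemma integral_pbetaRadial_norm (hβ : 0 < β) (ht : 0 < t) (ha : 0 < a) :
    ∫ y : E3, pbetaRadial β t a ‖y‖
      = 1 / (4 * π * β * a) * (exp (-(4 * π * β * a) + 16 * π ^ 2 * β ^ 2 * t)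
          * erfc (a / (2 * √t) - 4 * π * β * √t) - erfc (a / (2 * √t))) := by
  have hb : 0 < 4 * π * β := by positivity
  have hmass : 0 ≤ 8 * π * t / a *
      ∫ w in Ioi 0, (exp (4 * π * β * w) - 1) / (4 * π * β) * heatR t (a + w) :=
    mul_nonneg (by positivity) (setIntegral_nonneg measurableSet_Ioi fun w hw =>
      mul_nonneg (exp_mul_sub_one_div_nonneg hb (le_of_lt hw)) (heatR_nonneg ht.le _))
  have harg : (a - 2 * (4 * π * β) * t) / (2 * √t) = a / (2 * √t) - 4 * π * β * √t := by
    have : √t ≠ 0 := by positivity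
    field_simp
    rw [sq_sqrt ht.le]
  have hnonneg : 0 ≤ᵐ[volume] fun y : E3 => pbetaRadial β t a ‖y‖ :=
    .of_forall fun y => pbetaRadial_nonneg hβ.le ht.le ha.le (norm_nonneg y)
  rw [integral_eq_lintegral_of_nonneg_ae hnonneg
      (measurable_pbetaRadial.comp measurable_norm).aestronglyMeasurable,
    lintegral_ofReal_pbetaRadial_norm hβ ht ha, ENNReal.toReal_ofReal hmass, div_mul_eq_mul_div,
    integral_Ioi_exp_sub_one_div_mul_heatR_const_add ht, harg,
    show (4 * π * β) ^ 2 * t - 4 * π * β * a = -(4 * π * β * a) + 16 * π ^ 2 * β ^ 2 * t by ring]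
  ring

end Radial

theorem pbeta_total_mass (t β : ℝ) (ht : 0 < t) (hβ : 0 < β)
    (x : E3) (hx : x ≠ 0) :
    ∫ y : E3, Pbeta β t x y
      = 1 + 1 / (4 * π * β * ‖x‖) *
          (Real.exp (-(4 * π * β * ‖x‖) + 16 * π ^ 2 * β ^ 2 * t)
              * erfc (‖x‖ / (2 * Real.sqrt t) - 4 * π * β * Real.sqrt t)
            - erfc (‖x‖ / (2 * Real.sqrt t))) := by
  have hx' : 0 < ‖x‖ := norm_pos_iff.2 hx
  simp_rw [Pbeta_eq_heatK_add_pbetaRadial]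
  rw [integral_add (integrable_heatK ht x) (integrable_pbetaRadial_norm hβ ht hx'),
    integral_heatK ht x, integral_pbetaRadial_norm hβ ht hx']

end
end

section
/- Regime-split gradient bound: fix L > 0. There exists a constant C_L > 0 such that for all T, β > 0 with β√T ≤ L, the function x ↦ Q_T^β(x) is differentiable at every x ∈ ℝ³ \ {0} and ‖∇Q_T^β(x)‖ ≤ C_L · [ ((1+√T)/|x|²) · 1_{|x| ≤ √T} + (1/|x| + 1/(|x|√T)) · 1_{|x| > √T} ] · e^{−4πβ|x|}. -/
open MeasureTheory Real
open scoped Classical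

noncomputable section

/-! `Qbeta β T x = q ‖x‖` for the radial profile
`q ρ = (a ρ √(πT))⁻¹ ∫₀^∞ (e^{aw} - 1) e^{-(ρ+w)²/4T} dw`, `a = 4πβ`, so `|∇Q| ≤ |q'(‖x‖)|`.
Differentiating under the integral sign and completing the square,
`e^{aw} e^{-(ρ+w)²/4T} = e^{a²T - aρ} e^{-(w+ρ-2aT)²/4T}`, both the integral and its
`ρ`-derivative are dominated by shifted Gaussians of total mass `O(√T)`. The factor `a` lost in
the prefactor is recovered from `e^{aw} - 1 ≤ a w e^{aw}`, and the polynomial weights `ρ + w`,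
`(ρ + w)²` are absorbed by halving the Gaussian rate. This gives
`|q'(ρ)| ≲ (√T/ρ² + 1/ρ) e^{a²T} e^{-aρ}` with `a²T = (4πβ√T)² ≤ (4πL)²`, and `√T/ρ² + 1/ρ` is
at most twice the regime-split weight. -/

open Set

lemma exp_sub_one_le_mul_exp (x : ℝ) : exp x - 1 ≤ x * exp x := by
  have h := mul_le_mul_of_nonneg_right (one_sub_le_exp_neg x) (exp_nonneg x)
  rw [← exp_add, neg_add_cancel, exp_zero] at h
  linarith

section GaussianMoments

variable {T : ℝ}

lemma exp_neg_sq_div_four_eq (u : ℝ) :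
    exp (-u ^ 2 / (4 * T)) = exp (-u ^ 2 / (8 * T)) * exp (-u ^ 2 / (8 * T)) := by
  rw [← exp_add]; congr 1; ring

lemma exp_neg_sq_div_four_le (hT : 0 < T) (u : ℝ) :
    exp (-u ^ 2 / (4 * T)) ≤ exp (-u ^ 2 / (8 * T)) := by
  rw [exp_le_exp, neg_div, neg_div, neg_le_neg_iff]
  exact div_le_div_of_nonneg_left (sq_nonneg u) (by positivity) (by linarith)

lemma abs_mul_exp_neg_sq_div_le (hT : 0 < T) (u : ℝ) :
    |u| * exp (-u ^ 2 / (4 * T)) ≤ 3 * √T * exp (-u ^ 2 / (8 * T)) := by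
  have hs := sqrt_pos.2 hT
  have hu : |u| ≤ 3 * √T * exp (u ^ 2 / (8 * T)) := by
    calc |u| ≤ 3 * √T * (u ^ 2 / (8 * T) + 1) := by
          have hsT := sq_sqrt hT.le
          rw [← sq_abs u]
          field_simp
          nlinarith [mul_nonneg hs.le (sq_nonneg (|u| - 2 * √T)), abs_nonneg u]
      _ ≤ 3 * √T * exp (u ^ 2 / (8 * T)) := by gcongr; exact add_one_le_exp _
  calc |u| * exp (-u ^ 2 / (4 * T))
      ≤ 3 * √T * exp (u ^ 2 / (8 * T)) * exp (-u ^ 2 / (8 * T)) * exp (-u ^ 2 / (8 * T)) := by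
        rw [exp_neg_sq_div_four_eq, ← mul_assoc]; gcongr
    _ = 3 * √T * exp (-u ^ 2 / (8 * T)) := by
        rw [mul_assoc (3 * √T), ← exp_add, neg_div, add_neg_cancel, exp_zero, mul_one]

lemma sq_mul_exp_neg_sq_div_le (hT : 0 < T) (u : ℝ) :
    u ^ 2 * exp (-u ^ 2 / (4 * T)) ≤ 8 * T * exp (-u ^ 2 / (8 * T)) := by
  have hu : u ^ 2 ≤ 8 * T * exp (u ^ 2 / (8 * T)) := by
    calc u ^ 2 = 8 * T * (u ^ 2 / (8 * T)) := by field_simp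
      _ ≤ 8 * T * exp (u ^ 2 / (8 * T)) := by
        gcongr; linarith [add_one_le_exp (u ^ 2 / (8 * T))]
  calc u ^ 2 * exp (-u ^ 2 / (4 * T))
      ≤ 8 * T * exp (u ^ 2 / (8 * T)) * exp (-u ^ 2 / (8 * T)) * exp (-u ^ 2 / (8 * T)) := by
        rw [exp_neg_sq_div_four_eq, ← mul_assoc]; gcongr
    _ = 8 * T * exp (-u ^ 2 / (8 * T)) := by
        rw [mul_assoc (8 * T), ← exp_add, neg_div, add_neg_cancel, exp_zero, mul_one]

end GaussianMoments

section GaussianIntegrals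

lemma exp_neg_sq_add_div_eq (s c w : ℝ) :
    exp (-(w + c) ^ 2 / s) = exp (-s⁻¹ * (w + c) ^ 2) := by
  congr 1; ring

lemma integral_exp_neg_sq_add_div (s c : ℝ) :
    ∫ w : ℝ, exp (-(w + c) ^ 2 / s) = √(π * s) := by
  simp_rw [exp_neg_sq_add_div_eq]
  rw [integral_add_right_eq_self (fun u : ℝ => exp (-s⁻¹ * u ^ 2)) c, integral_gaussian,
    div_inv_eq_mul]

variable {s : ℝ}

lemma integrable_exp_neg_sq_add_div (hs : 0 < s) (c : ℝ) :
    Integrable (fun w : ℝ => exp (-(w + c) ^ 2 / s)) := by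
  simp_rw [exp_neg_sq_add_div_eq]
  exact (integrable_exp_neg_mul_sq (inv_pos.2 hs)).comp_add_right c

lemma integrable_exp_mul_sub_sq_div (hs : 0 < s) (a : ℝ) :
    Integrable (fun w : ℝ => exp (a * w - w ^ 2 / s)) := by
  have h : ∀ w, exp (a * w - w ^ 2 / s)
      = exp (a ^ 2 * s / 4) * exp (-(w + -(a * s / 2)) ^ 2 / s) := by
    intro w
    rw [← exp_add]
    congr 1
    field_simp
    ring
  simp_rw [h]
  exact (integrable_exp_neg_sq_add_div hs _).const_mul _

lemma abs_setIntegral_Ioi_le_of_le_gaussian {f : ℝ → ℝ} {K c : ℝ} (hs : 0 < s)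
    (hf : ∀ w ∈ Ioi (0 : ℝ), |f w| ≤ K * exp (-(w + c) ^ 2 / s)) :
    |∫ w in Ioi 0, f w| ≤ K * √(π * s) := by
  have hK : 0 ≤ K :=
    nonneg_of_mul_nonneg_left ((abs_nonneg _).trans (hf 1 (mem_Ioi.2 one_pos))) (exp_pos _)
  have hg := (integrable_exp_neg_sq_add_div hs c).const_mul K
  calc |∫ w in Ioi 0, f w|
      ≤ ∫ w in Ioi 0, K * exp (-(w + c) ^ 2 / s) := by
        rw [← Real.norm_eq_abs]
        exact norm_integral_le_of_norm_le hg.integrableOn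
          ((ae_restrict_iff' measurableSet_Ioi).2 (ae_of_all _ hf))
    _ ≤ ∫ w, K * exp (-(w + c) ^ 2 / s) :=
        setIntegral_le_integral hg (ae_of_all _ fun w => by positivity)
    _ = K * √(π * s) := by rw [integral_const_mul, integral_exp_neg_sq_add_div]

end GaussianIntegrals

def excessIntegrand (a T ρ w : ℝ) : ℝ := (exp (a * w) - 1) * exp (-(ρ + w) ^ 2 / (4 * T))

section Integrand

lemma continuous_excessIntegrand (a T ρ : ℝ) : Continuous (excessIntegrand a T ρ) := by
  unfold excessIntegrand; fun_prop

lemma hasDerivAt_excessIntegrand (a T w ρ : ℝ) :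
    HasDerivAt (excessIntegrand a T · w) (-((ρ + w) / (2 * T)) * excessIntegrand a T ρ w) ρ := by
  have hq : HasDerivAt (fun ρ => -(ρ + w) ^ 2 / (4 * T)) (-((ρ + w) / (2 * T))) ρ := by
    refine ((((hasDerivAt_id ρ).add_const w).pow 2).neg.div_const (4 * T)).congr_deriv ?_
    simp only [id, Nat.cast_ofNat]
    ring
  refine (hq.exp.const_mul (exp (a * w) - 1)).congr_deriv ?_
  unfold excessIntegrand
  ring

variable {a T ρ w : ℝ}

lemma excessIntegrand_nonneg (ha : 0 ≤ a) (hw : 0 ≤ w) : 0 ≤ excessIntegrand a T ρ w :=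
  mul_nonneg (sub_nonneg.2 (one_le_exp (mul_nonneg ha hw))) (exp_nonneg _)

lemma exp_mul_mul_exp_neg_sq_eq (hT : T ≠ 0) :
    exp (a * w) * exp (-(ρ + w) ^ 2 / (4 * T))
      = exp (a ^ 2 * T - a * ρ) * exp (-(w + (ρ - 2 * a * T)) ^ 2 / (4 * T)) := by
  rw [← exp_add, ← exp_add]
  congr 1
  field_simp
  ring

lemma excessIntegrand_le (ha : 0 ≤ a) (hT : 0 < T) (hρ : 0 ≤ ρ) :
    excessIntegrand a T ρ w
      ≤ a * exp (a ^ 2 * T - a * ρ) * ((ρ + w) * exp (-(w + (ρ - 2 * a * T)) ^ 2 / (4 * T))) := by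
  calc excessIntegrand a T ρ w
      ≤ a * w * exp (a * w) * exp (-(ρ + w) ^ 2 / (4 * T)) := by
        unfold excessIntegrand; gcongr; exact exp_sub_one_le_mul_exp _
    _ ≤ a * (ρ + w) * (exp (a * w) * exp (-(ρ + w) ^ 2 / (4 * T))) := by
        rw [← mul_assoc]; gcongr; linarith
    _ = _ := by rw [exp_mul_mul_exp_neg_sq_eq hT.ne']; ring

lemma excessIntegrand_le_gaussian (ha : 0 ≤ a) (hT : 0 < T) (hρ : 0 ≤ ρ) :
    excessIntegrand a T ρ w ≤ a * exp (a ^ 2 * T - a * ρ) * (3 * √T + 2 * a * T)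
      * exp (-(w + (ρ - 2 * a * T)) ^ 2 / (8 * T)) := by
  set u := w + (ρ - 2 * a * T)
  have hmoment : (ρ + w) * exp (-u ^ 2 / (4 * T))
      ≤ (3 * √T + 2 * a * T) * exp (-u ^ 2 / (8 * T)) :=
    calc (ρ + w) * exp (-u ^ 2 / (4 * T))
        ≤ |u| * exp (-u ^ 2 / (4 * T)) + 2 * a * T * exp (-u ^ 2 / (4 * T)) := by
          rw [← add_mul]
          exact mul_le_mul_of_nonneg_right (by linarith [le_abs_self u]) (exp_nonneg _)
      _ ≤ 3 * √T * exp (-u ^ 2 / (8 * T)) + 2 * a * T * exp (-u ^ 2 / (8 * T)) :=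
          add_le_add (abs_mul_exp_neg_sq_div_le hT u)
            (mul_le_mul_of_nonneg_left (exp_neg_sq_div_four_le hT u) (by positivity))
      _ = _ := by ring
  calc excessIntegrand a T ρ w
      ≤ a * exp (a ^ 2 * T - a * ρ) * ((ρ + w) * exp (-u ^ 2 / (4 * T))) :=
        excessIntegrand_le ha hT hρ
    _ ≤ _ := by rw [mul_assoc _ (3 * √T + 2 * a * T)]; gcongr

lemma mul_excessIntegrand_le_gaussian (ha : 0 ≤ a) (hT : 0 < T) (hρ : 0 ≤ ρ) (hw : 0 ≤ w) :
    (ρ + w) / (2 * T) * excessIntegrand a T ρ w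
      ≤ a * exp (a ^ 2 * T - a * ρ) * (8 + 4 * a ^ 2 * T)
        * exp (-(w + (ρ - 2 * a * T)) ^ 2 / (8 * T)) := by
  set u := w + (ρ - 2 * a * T)
  have hmoment : (ρ + w) ^ 2 * exp (-u ^ 2 / (4 * T))
      ≤ (16 * T + 8 * a ^ 2 * T ^ 2) * exp (-u ^ 2 / (8 * T)) :=
    calc (ρ + w) ^ 2 * exp (-u ^ 2 / (4 * T))
        ≤ 2 * (u ^ 2 * exp (-u ^ 2 / (4 * T)))
          + 8 * a ^ 2 * T ^ 2 * exp (-u ^ 2 / (4 * T)) := by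
          have : (ρ + w) ^ 2 ≤ 2 * u ^ 2 + 8 * a ^ 2 * T ^ 2 := by
            nlinarith [sq_nonneg (u - 2 * a * T)]
          nlinarith [exp_pos (-u ^ 2 / (4 * T))]
      _ ≤ 2 * (8 * T * exp (-u ^ 2 / (8 * T)))
          + 8 * a ^ 2 * T ^ 2 * exp (-u ^ 2 / (8 * T)) :=
          add_le_add (mul_le_mul_of_nonneg_left (sq_mul_exp_neg_sq_div_le hT u) (by norm_num))
            (mul_le_mul_of_nonneg_left (exp_neg_sq_div_four_le hT u) (by positivity))
      _ = _ := by ring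
  calc (ρ + w) / (2 * T) * excessIntegrand a T ρ w
      ≤ (ρ + w) / (2 * T)
          * (a * exp (a ^ 2 * T - a * ρ) * ((ρ + w) * exp (-u ^ 2 / (4 * T)))) := by
        gcongr
        exact excessIntegrand_le ha hT hρ
    _ = a * exp (a ^ 2 * T - a * ρ) / (2 * T) * ((ρ + w) ^ 2 * exp (-u ^ 2 / (4 * T))) := by ring
    _ ≤ a * exp (a ^ 2 * T - a * ρ) / (2 * T) * ((16 * T + 8 * a ^ 2 * T ^ 2)
          * exp (-u ^ 2 / (8 * T))) := by gcongr
    _ = _ := by field_simp; ring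

lemma mul_excessIntegrand_le_uniform (hT : 0 < T) (hρ : 0 ≤ ρ) (hw : 0 ≤ w) :
    (ρ + w) / (2 * T) * excessIntegrand a T ρ w
      ≤ 3 * √T / (2 * T) * exp (a * w - w ^ 2 / (8 * T)) := by
  have hv : (ρ + w) * exp (-(ρ + w) ^ 2 / (4 * T)) ≤ 3 * √T * exp (-w ^ 2 / (8 * T)) :=
    calc (ρ + w) * exp (-(ρ + w) ^ 2 / (4 * T))
        ≤ 3 * √T * exp (-(ρ + w) ^ 2 / (8 * T)) := by
          simpa [abs_of_nonneg (add_nonneg hρ hw)] using abs_mul_exp_neg_sq_div_le hT (ρ + w)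
      _ ≤ 3 * √T * exp (-w ^ 2 / (8 * T)) := by
          gcongr
          linarith
  calc (ρ + w) / (2 * T) * excessIntegrand a T ρ w
      ≤ (ρ + w) / (2 * T) * (exp (a * w) * exp (-(ρ + w) ^ 2 / (4 * T))) := by
        unfold excessIntegrand
        have : 0 ≤ (ρ + w) / (2 * T) := by positivity
        gcongr
        linarith
    _ = exp (a * w) / (2 * T) * ((ρ + w) * exp (-(ρ + w) ^ 2 / (4 * T))) := by ring
    _ ≤ exp (a * w) / (2 * T) * (3 * √T * exp (-w ^ 2 / (8 * T))) := by gcongr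
    _ = _ := by rw [sub_eq_add_neg, exp_add, ← neg_div]; ring

end Integrand

def massExcessProfile (a T ρ : ℝ) : ℝ :=
  (a * ρ * √(π * T))⁻¹ * ∫ w in Ioi 0, excessIntegrand a T ρ w

def massExcessProfileDeriv (a T r : ℝ) : ℝ :=
  (a * √(π * T))⁻¹ * (-(r ^ 2)⁻¹ * (∫ w in Ioi 0, excessIntegrand a T r w)
    + r⁻¹ * ∫ w in Ioi 0, -((r + w) / (2 * T)) * excessIntegrand a T r w)

lemma Qbeta_eq_massExcessProfile_norm {β T : ℝ} (hT : T ≠ 0) :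
    Qbeta β T = fun x => massExcessProfile (4 * π * β) T ‖x‖ := by
  funext x
  simp only [Qbeta, hT, if_false, massExcessProfile, excessIntegrand]

section Profile

variable {a T r : ℝ}

lemma hasDerivAt_integral_excessIntegrand (ha : 0 ≤ a) (hT : 0 < T) (hr : 0 < r) :
    HasDerivAt (fun ρ => ∫ w in Ioi 0, excessIntegrand a T ρ w)
      (∫ w in Ioi 0, -((r + w) / (2 * T)) * excessIntegrand a T r w) r := by
  have hF_int : IntegrableOn (excessIntegrand a T r) (Ioi 0) := by
    refine Integrable.mono' ((integrable_exp_neg_sq_add_div (by positivity : 0 < 8 * T)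
      (r - 2 * a * T)).const_mul
        (a * exp (a ^ 2 * T - a * r) * (3 * √T + 2 * a * T))).integrableOn
      (continuous_excessIntegrand a T r).aestronglyMeasurable
      ((ae_restrict_iff' measurableSet_Ioi).2 (ae_of_all _ fun w (hw : 0 < w) => ?_))
    rw [norm_of_nonneg (excessIntegrand_nonneg ha hw.le)]
    exact excessIntegrand_le_gaussian ha hT hr.le
  have h_bound : ∀ᵐ w ∂(volume.restrict (Ioi 0)), ∀ ρ ∈ Ioi (0 : ℝ),
      ‖-((ρ + w) / (2 * T)) * excessIntegrand a T ρ w‖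
        ≤ 3 * √T / (2 * T) * exp (a * w - w ^ 2 / (8 * T)) := by
    refine (ae_restrict_iff' measurableSet_Ioi).2
      (ae_of_all _ fun w (hw : 0 < w) ρ (hρ : 0 < ρ) => ?_)
    rw [neg_mul, norm_neg,
      norm_of_nonneg (mul_nonneg (by positivity) (excessIntegrand_nonneg ha hw.le))]
    exact mul_excessIntegrand_le_uniform hT hρ.le hw.le
  exact (hasDerivAt_integral_of_dominated_loc_of_deriv_le (Ioi_mem_nhds hr)
    (Filter.Eventually.of_forall fun ρ => (continuous_excessIntegrand a T ρ).aestronglyMeasurable)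
    hF_int (by unfold excessIntegrand; fun_prop) h_bound
    ((integrable_exp_mul_sub_sq_div (by positivity) a).const_mul _).integrableOn
    (ae_of_all _ fun w ρ _ => hasDerivAt_excessIntegrand a T w ρ)).2

lemma hasDerivAt_massExcessProfile (ha : 0 ≤ a) (hT : 0 < T) (hr : 0 < r) :
    HasDerivAt (massExcessProfile a T) (massExcessProfileDeriv a T r) r := by
  have h : massExcessProfile a T
      = fun ρ => (a * √(π * T))⁻¹ * (ρ⁻¹ * ∫ w in Ioi 0, excessIntegrand a T ρ w) := by
    funext ρ; unfold massExcessProfile; ring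
  rw [h]
  exact (((hasDerivAt_inv hr.ne').mul (hasDerivAt_integral_excessIntegrand ha hT hr)).const_mul
    _).congr_deriv (by unfold massExcessProfileDeriv; ring)

lemma abs_integral_excessIntegrand_le (ha : 0 ≤ a) (hT : 0 < T) (hr : 0 ≤ r) :
    |∫ w in Ioi 0, excessIntegrand a T r w|
      ≤ a * exp (a ^ 2 * T - a * r) * (3 * √T + 2 * a * T) * √(π * (8 * T)) :=
  abs_setIntegral_Ioi_le_of_le_gaussian (by positivity) fun w (hw : 0 < w) => by
    rw [abs_of_nonneg (excessIntegrand_nonneg ha hw.le)]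
    exact excessIntegrand_le_gaussian ha hT hr

lemma abs_integral_deriv_excessIntegrand_le (ha : 0 ≤ a) (hT : 0 < T) (hr : 0 ≤ r) :
    |∫ w in Ioi 0, -((r + w) / (2 * T)) * excessIntegrand a T r w|
      ≤ a * exp (a ^ 2 * T - a * r) * (8 + 4 * a ^ 2 * T) * √(π * (8 * T)) :=
  abs_setIntegral_Ioi_le_of_le_gaussian (by positivity) fun w (hw : 0 < w) => by
    rw [neg_mul, abs_neg, abs_of_nonneg (mul_nonneg (by positivity)
      (excessIntegrand_nonneg ha hw.le))]
    exact mul_excessIntegrand_le_gaussian ha hT hr hw.le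

lemma abs_massExcessProfileDeriv_le (ha : 0 < a) (hT : 0 < T) (hr : 0 < r) :
    |massExcessProfileDeriv a T r|
      ≤ 3 * (8 + 4 * a ^ 2 * T) * exp (a ^ 2 * T) * (√T / r ^ 2 + 1 / r)
        * exp (-(a * r)) := by
  set I := ∫ w in Ioi 0, excessIntegrand a T r w
  set I' := ∫ w in Ioi 0, -((r + w) / (2 * T)) * excessIntegrand a T r w
  set E := exp (a ^ 2 * T - a * r) with hE
  have h8 : √(π * (8 * T)) = √8 * √(π * T) := by
    rw [show π * (8 * T) = 8 * (π * T) by ring, sqrt_mul (by norm_num)]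
  have hsqrt8 : √8 ≤ 3 := by
    rw [sqrt_le_left (by norm_num)]; norm_num
  have hcoef : 3 * √T + 2 * a * T ≤ (8 + 4 * a ^ 2 * T) * √T := by
    have key : ∀ x : ℝ, 0 ≤ x → 3 * x + 2 * a * x ^ 2 ≤ (8 + 4 * a ^ 2 * x ^ 2) * x :=
      fun x hx => by nlinarith [mul_nonneg hx (sq_nonneg (2 * a * x - 1))]
    simpa [sq_sqrt hT.le] using key √T (sqrt_nonneg T)
  calc |massExcessProfileDeriv a T r|
      ≤ (a * √(π * T))⁻¹ * ((r ^ 2)⁻¹ * |I| + r⁻¹ * |I'|) := by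
        rw [massExcessProfileDeriv, abs_mul, abs_of_pos (by positivity : 0 < (a * √(π * T))⁻¹)]
        gcongr
        calc _ ≤ |-(r ^ 2)⁻¹ * I| + |r⁻¹ * I'| := abs_add_le _ _
          _ = _ := by
            rw [abs_mul, abs_mul, abs_neg, abs_of_pos (inv_pos.2 (pow_pos hr 2)),
              abs_of_pos (inv_pos.2 hr)]
    _ ≤ (a * √(π * T))⁻¹ * ((r ^ 2)⁻¹ * (a * E * (3 * √T + 2 * a * T) * √(π * (8 * T)))
          + r⁻¹ * (a * E * (8 + 4 * a ^ 2 * T) * √(π * (8 * T)))) := by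
        gcongr
        · exact abs_integral_excessIntegrand_le ha.le hT hr.le
        · exact abs_integral_deriv_excessIntegrand_le ha.le hT hr.le
    _ = √8 * E * ((3 * √T + 2 * a * T) / r ^ 2 + (8 + 4 * a ^ 2 * T) / r) := by
        rw [h8]; field_simp
    _ ≤ 3 * E * ((8 + 4 * a ^ 2 * T) * √T / r ^ 2 + (8 + 4 * a ^ 2 * T) / r) := by
        gcongr
    _ = _ := by rw [hE, sub_eq_add_neg, exp_add]; ring

end Profile

lemma HasDerivAt.differentiableAt_comp_norm_and_norm_gradient_le {F : Type*}
    [NormedAddCommGroup F] [InnerProductSpace ℝ F] [CompleteSpace F] {f : ℝ → ℝ} {D : ℝ} {x : F}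
    (hf : HasDerivAt f D ‖x‖) (hx : x ≠ 0) :
    DifferentiableAt ℝ (fun y => f ‖y‖) x ∧ ‖gradient (fun y => f ‖y‖) x‖ ≤ |D| := by
  have hcomp : HasFDerivAt (fun y => f ‖y‖) (D • fderiv ℝ (‖·‖) x) x :=
    hf.comp_hasFDerivAt x (differentiableAt_id.norm ℝ hx).hasFDerivAt
  refine ⟨hcomp.differentiableAt, ?_⟩
  have hnorm : ‖fderiv ℝ (‖·‖) x‖ ≤ 1 :=
    NNReal.coe_one ▸ norm_fderiv_le_of_lipschitz ℝ lipschitzWith_one_norm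
  rw [gradient, LinearIsometryEquiv.norm_map, hcomp.fderiv, norm_smul, Real.norm_eq_abs]
  exact mul_le_of_le_one_right (abs_nonneg D) hnorm

lemma div_sq_add_inv_le_two_mul_regimes {r s : ℝ} (hr : 0 < r) (hs : 0 ≤ s) :
    s / r ^ 2 + 1 / r
      ≤ 2 * ((if r ≤ s then (1 + s) / r ^ 2 else 0)
        + (if s < r then 1 / r + 1 / (r * s) else 0)) := by
  rcases le_or_gt r s with h | h
  · rw [if_pos h, if_neg h.not_gt]
    have h1 : 1 / r ≤ s / r ^ 2 := by
      rw [div_le_div_iff₀ hr (by positivity)]; nlinarith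
    have h2 : s / r ^ 2 ≤ (1 + s) / r ^ 2 := by gcongr; linarith
    linarith
  · rw [if_neg h.not_ge, if_pos h]
    have h1 : s / r ^ 2 ≤ 1 / r := by
      rw [div_le_div_iff₀ (by positivity) hr]; nlinarith
    have h2 : 0 ≤ 1 / (r * s) := by positivity
    linarith

theorem mass_excess_gradient_bound_regimes_general (L : ℝ) :
    ∃ C > 0, ∀ T β : ℝ, 0 < T → 0 < β → β * Real.sqrt T ≤ L →
      ∀ x : E3, x ≠ 0 →
        DifferentiableAt ℝ (Qbeta β T) x ∧
        ‖gradient (Qbeta β T) x‖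
          ≤ C * ((if ‖x‖ ≤ Real.sqrt T then (1 + Real.sqrt T) / ‖x‖ ^ 2 else 0)
                  + (if Real.sqrt T < ‖x‖ then 1 / ‖x‖ + 1 / (‖x‖ * Real.sqrt T) else 0))
              * Real.exp (-(4 * π * β * ‖x‖)) := by
  refine ⟨6 * (8 + 4 * (4 * π * L) ^ 2) * exp ((4 * π * L) ^ 2), by positivity, ?_⟩
  intro T β hT hβ hβL x hx
  have ha : 0 < 4 * π * β := by positivity
  have hr : 0 < ‖x‖ := norm_pos_iff.2 hx
  have haT : (4 * π * β) ^ 2 * T ≤ (4 * π * L) ^ 2 := by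
    calc (4 * π * β) ^ 2 * T = (4 * π * β) ^ 2 * √T ^ 2 := by rw [sq_sqrt hT.le]
      _ = (4 * π * (β * √T)) ^ 2 := by ring
      _ ≤ (4 * π * L) ^ 2 := by gcongr
  rw [Qbeta_eq_massExcessProfile_norm hT.ne']
  obtain ⟨hdiff, hgrad⟩ := (hasDerivAt_massExcessProfile ha.le hT hr)
    |>.differentiableAt_comp_norm_and_norm_gradient_le hx
  refine ⟨hdiff, hgrad.trans <| (abs_massExcessProfileDeriv_le ha hT hr).trans ?_⟩
  calc _ ≤ 3 * (8 + 4 * (4 * π * L) ^ 2) * exp ((4 * π * L) ^ 2)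
        * (2 * ((if ‖x‖ ≤ √T then (1 + √T) / ‖x‖ ^ 2 else 0)
          + (if √T < ‖x‖ then 1 / ‖x‖ + 1 / (‖x‖ * √T) else 0))) * exp (-(4 * π * β * ‖x‖)) := by
        gcongr 3 * ?_ * ?_ * ?_ * _
        · linarith
        · exact exp_le_exp.2 haT
        · exact div_sq_add_inv_le_two_mul_regimes hr (sqrt_nonneg T)
    _ = _ := by ring

theorem mass_excess_gradient_bound_regimes (L : ℝ) (hL : 0 < L) :
    ∃ C > 0, ∀ T β : ℝ, 0 < T → 0 < β → β * Real.sqrt T ≤ L →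
      ∀ x : E3, x ≠ 0 →
        DifferentiableAt ℝ (Qbeta β T) x ∧
        ‖gradient (Qbeta β T) x‖
          ≤ C * ((if ‖x‖ ≤ Real.sqrt T then (1 + Real.sqrt T) / ‖x‖ ^ 2 else 0)
                  + (if Real.sqrt T < ‖x‖ then 1 / ‖x‖ + 1 / (‖x‖ * Real.sqrt T) else 0))
              * Real.exp (-(4 * π * β * ‖x‖)) :=
  mass_excess_gradient_bound_regimes_general L

end
end

section
/- One-step boundary-avoidance bound: fix T, β, ε > 0 and δ > 0. There exist constants C, c > 0, depending only on (T, β, ε, δ), such that for every 0 ≤ s < t ≤ T and every x ∈ ℝ³ with |x| ≥ ε + δ: ∫_{{y ∈ ℝ³ : |y| ≤ ε}} p_{s,t}^{T,β}(x,y) dy ≤ C · e^{−c/(t−s)}. -/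
open MeasureTheory Real
open scoped Classical

noncomputable section

/-! Since `Q ≥ 0`, the Doob factor is at most `1 + Q_{T-t}(y) ≲ 1/|y|`, and, as `δ ≤ |x| - |y|`,
each of the three terms of `P^β_{t-s}(x,y)` is at most `1 + C/(|x||y|)` times the radial free
kernel `P_{t-s}(δ)`; in the `β`-integral this follows by completing the square in the exponent.
So the integrand is `≲ |y|⁻² P_{t-s}(δ)`, where `|y|⁻²` is integrable on the ball in dimension
three, and `P_τ(δ) = (4πτ)^{-3/2} e^{-δ²/(4τ)} ≲ e^{-δ²/(8τ)}` uniformly in `τ ≤ T`. -/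

lemma integrable_exp_neg_sub_sq_div {τ : ℝ} (hτ : 0 < τ) (b : ℝ) :
    Integrable (fun w : ℝ => exp (-(w - b) ^ 2 / (4 * τ))) := by
  have h := (integrable_exp_neg_mul_sq (b := (4 * τ)⁻¹) (by positivity)).comp_sub_right b
  refine h.congr (ae_of_all _ fun w => ?_)
  change exp (-(4 * τ)⁻¹ * (w - b) ^ 2) = _
  congr 1
  ring

lemma integral_exp_neg_sub_sq_div (τ b : ℝ) :
    ∫ w : ℝ, exp (-(w - b) ^ 2 / (4 * τ)) = 2 * √(π * τ) := by
  rw [integral_sub_right_eq_self (fun w : ℝ => exp (-w ^ 2 / (4 * τ))) b]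
  have h : (fun w : ℝ => exp (-w ^ 2 / (4 * τ))) = fun w => exp (-(4 * τ)⁻¹ * w ^ 2) := by
    funext w; congr 1; ring
  rw [h, integral_gaussian, div_inv_eq_mul, show π * (4 * τ) = 2 ^ 2 * (π * τ) by ring,
    sqrt_mul (by positivity), sqrt_sq zero_le_two]

lemma setIntegral_Ioi_le_of_le_gaussian {f : ℝ → ℝ} {M b τ : ℝ} (hτ : 0 < τ) (hM : 0 ≤ M)
    (hf₀ : ∀ w > 0, 0 ≤ f w) (hf : ∀ w > 0, f w ≤ M * exp (-(w - b) ^ 2 / (4 * τ))) :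
    ∫ w in Set.Ioi 0, f w ≤ M * (2 * √(π * τ)) := by
  have hg := (integrable_exp_neg_sub_sq_div hτ b).const_mul M
  calc ∫ w in Set.Ioi 0, f w
      ≤ ∫ w in Set.Ioi 0, M * exp (-(w - b) ^ 2 / (4 * τ)) :=
        integral_mono_of_nonneg ((ae_restrict_iff' measurableSet_Ioi).2 (ae_of_all _ hf₀))
          hg.integrableOn ((ae_restrict_iff' measurableSet_Ioi).2 (ae_of_all _ hf))
    _ ≤ ∫ w, M * exp (-(w - b) ^ 2 / (4 * τ)) :=
        setIntegral_le_integral hg (ae_of_all _ fun w => by positivity)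
    _ = M * (2 * √(π * τ)) := by rw [integral_const_mul, integral_exp_neg_sub_sq_div]

/-- Completing the square in `a w - (w + r)² / (4τ)`. -/
lemma exp_mul_mul_exp_neg_add_sq_le {a r w τ : ℝ} (hτ : 0 < τ) (hr : 0 ≤ r) (hw : 0 ≤ w) :
    exp (a * w) * exp (-(w + r) ^ 2 / (4 * τ))
      ≤ exp (a ^ 2 * τ) * exp (-r ^ 2 / (4 * τ)) * exp (-(w - 2 * a * τ) ^ 2 / (4 * τ)) := by
  simp only [← exp_add, exp_le_exp]
  have h : a ^ 2 * τ + -r ^ 2 / (4 * τ) + -(w - 2 * a * τ) ^ 2 / (4 * τ)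
      = a * w + -(w + r) ^ 2 / (4 * τ) + r * w / (2 * τ) := by
    field_simp; ring
  rw [h]
  linarith [show 0 ≤ r * w / (2 * τ) by positivity]

lemma heatR_nonneg_s16 {τ : ℝ} (hτ : 0 ≤ τ) (r : ℝ) : 0 ≤ heatR τ r := by
  unfold heatR
  positivity

lemma heatR_le_heatR {τ r r' : ℝ} (hτ : 0 < τ) (hr : 0 ≤ r) (hrr' : r ≤ r') :
    heatR τ r' ≤ heatR τ r := by
  unfold heatR
  gcongr

lemma heatK_eq_heatR (τ : ℝ) (x y : E3) : heatK τ x y = heatR τ ‖x - y‖ := rfl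

lemma integral_exp_mul_heatR_le {a r τ : ℝ} (hτ : 0 < τ) (hr : 0 ≤ r) :
    ∫ u in Set.Ioi 0, exp (a * u) * heatR τ (u + r)
      ≤ exp (a ^ 2 * τ) * heatR τ r * (2 * √(π * τ)) :=
  setIntegral_Ioi_le_of_le_gaussian (f := fun u => exp (a * u) * heatR τ (u + r))
    (M := exp (a ^ 2 * τ) * heatR τ r) (b := 2 * a * τ) hτ (by positivity [heatR_nonneg_s16 hτ.le r])
    (fun u _ => mul_nonneg (exp_nonneg _) (heatR_nonneg_s16 hτ.le _)) fun u hu => by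
      have := mul_le_mul_of_nonneg_left (exp_mul_mul_exp_neg_add_sq_le (a := a) hτ hr hu.le)
        (by positivity : 0 ≤ (4 * π * τ) ^ (-(3 : ℝ) / 2))
      unfold heatR
      linarith

lemma Qbeta_nonneg {β : ℝ} (hβ : 0 ≤ β) (τ : ℝ) (x : E3) : 0 ≤ Qbeta β τ x := by
  unfold Qbeta
  split_ifs
  · rfl
  · refine mul_nonneg (by positivity) (setIntegral_nonneg measurableSet_Ioi fun w hw => ?_)
    have : 1 ≤ exp (4 * π * β * w) := one_le_exp (by have := pi_pos; positivity [hw.out.le])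
    exact mul_nonneg (by linarith) (exp_nonneg _)

lemma Qbeta_le {β τ T : ℝ} (hβ : 0 < β) (hτ : 0 ≤ τ) (hτT : τ ≤ T) {x : E3} (hx : x ≠ 0) :
    Qbeta β τ x ≤ exp ((4 * π * β) ^ 2 * T) / (2 * π * β * ‖x‖) := by
  have hπ := pi_pos
  have hx₀ := norm_pos_iff.2 hx
  unfold Qbeta
  split_ifs with h0
  · positivity
  have hτ : 0 < τ := lt_of_le_of_ne hτ (Ne.symm h0)
  have hI := setIntegral_Ioi_le_of_le_gaussian
    (f := fun w => (exp (4 * π * β * w) - 1) * exp (-(‖x‖ + w) ^ 2 / (4 * τ)))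
    (M := exp ((4 * π * β) ^ 2 * τ) * exp (-‖x‖ ^ 2 / (4 * τ))) (b := 2 * (4 * π * β) * τ)
    hτ (by positivity)
    (fun w hw => mul_nonneg (by linarith [one_le_exp (by positivity : 0 ≤ 4 * π * β * w)])
      (exp_nonneg _))
    fun w hw => by
      have := exp_mul_mul_exp_neg_add_sq_le (a := 4 * π * β) hτ hx₀.le hw.le
      rw [add_comm ‖x‖ w]
      nlinarith [exp_pos (-(w + ‖x‖) ^ 2 / (4 * τ))]
  calc (4 * π * β * ‖x‖ * √(π * τ))⁻¹ *
        ∫ w in Set.Ioi 0, (exp (4 * π * β * w) - 1) * exp (-(‖x‖ + w) ^ 2 / (4 * τ))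
      ≤ (4 * π * β * ‖x‖ * √(π * τ))⁻¹ *
        (exp ((4 * π * β) ^ 2 * τ) * exp (-‖x‖ ^ 2 / (4 * τ)) * (2 * √(π * τ))) := by
        gcongr
    _ ≤ (4 * π * β * ‖x‖ * √(π * τ))⁻¹ * (exp ((4 * π * β) ^ 2 * T) * 1 * (2 * √(π * τ))) := by
        gcongr
        exact exp_le_one_iff.2 (div_nonpos_of_nonpos_of_nonneg (by nlinarith) (by positivity))
    _ = exp ((4 * π * β) ^ 2 * T) / (2 * π * β * ‖x‖) := by
        field_simp
        ring

lemma Pbeta_nonneg {β τ : ℝ} (hβ : 0 ≤ β) (hτ : 0 ≤ τ) (x y : E3) : 0 ≤ Pbeta β τ x y := by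
  have : 0 ≤ ∫ u in Set.Ioi 0, exp (4 * π * β * u) * heatR τ (u + ‖x‖ + ‖y‖) :=
    setIntegral_nonneg measurableSet_Ioi fun u _ => mul_nonneg (exp_nonneg _) (heatR_nonneg_s16 hτ _)
  unfold Pbeta
  have := pi_pos
  have := heatR_nonneg_s16 hτ (‖x‖ + ‖y‖)
  have := heatR_nonneg_s16 hτ ‖x - y‖
  rw [heatK_eq_heatR]
  positivity

lemma Pbeta_le {β τ T δ : ℝ} (hβ : 0 ≤ β) (hτ : 0 < τ) (hτT : τ ≤ T) (hδ : 0 ≤ δ) {x y : E3}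
    (hxy : ‖y‖ + δ ≤ ‖x‖) :
    Pbeta β τ x y ≤ (1 + (2 * T + 16 * π * β * T * √(π * T) * exp ((4 * π * β) ^ 2 * T))
      / (‖x‖ * ‖y‖)) * heatR τ δ := by
  have hπ := pi_pos
  have hT : 0 ≤ T := hτ.le.trans hτT
  have hR₀ := heatR_nonneg_s16 hτ.le (‖x‖ + ‖y‖)
  have hδ₀ := heatR_nonneg_s16 hτ.le δ
  have hK : heatK τ x y ≤ heatR τ δ :=
    heatR_le_heatR hτ hδ (by linarith [norm_sub_norm_le x y])
  have hR : heatR τ (‖x‖ + ‖y‖) ≤ heatR τ δ := heatR_le_heatR hτ hδ (by linarith [norm_nonneg y])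
  have hJ₀ : 0 ≤ ∫ u in Set.Ioi 0, exp (4 * π * β * u) * heatR τ (u + ‖x‖ + ‖y‖) :=
    setIntegral_nonneg measurableSet_Ioi fun u _ =>
      mul_nonneg (exp_nonneg _) (heatR_nonneg_s16 hτ.le _)
  have hJ : ∫ u in Set.Ioi 0, exp (4 * π * β * u) * heatR τ (u + ‖x‖ + ‖y‖)
      ≤ exp ((4 * π * β) ^ 2 * T) * heatR τ δ * (2 * √(π * T)) := by
    simp_rw [add_assoc]
    refine (integral_exp_mul_heatR_le hτ (by positivity)).trans ?_
    gcongr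
  unfold Pbeta
  calc heatK τ x y + 2 * τ / (‖x‖ * ‖y‖) * heatR τ (‖x‖ + ‖y‖)
        + 8 * π * β * τ / (‖x‖ * ‖y‖) *
          ∫ u in Set.Ioi 0, exp (4 * π * β * u) * heatR τ (u + ‖x‖ + ‖y‖)
      ≤ heatR τ δ + 2 * T / (‖x‖ * ‖y‖) * heatR τ δ
        + 8 * π * β * T / (‖x‖ * ‖y‖) *
          (exp ((4 * π * β) ^ 2 * T) * heatR τ δ * (2 * √(π * T))) := by
        gcongr
    _ = _ := by ring

lemma heatR_le_mul_exp_neg_div {τ T δ : ℝ} (hδ : 0 < δ) (hτ : 0 < τ) (hτT : τ ≤ T) :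
    heatR τ δ ≤ 128 * (4 * π) ^ (-(3 : ℝ) / 2) * √T / δ ^ 4 * exp (-(δ ^ 2 / 8) / τ) := by
  have hπ := pi_pos
  have hx₀ : 0 < δ ^ 2 / (8 * τ) := by positivity
  have hexp : exp (-(δ ^ 2 / (8 * τ))) ≤ 2 / (δ ^ 2 / (8 * τ)) ^ 2 := by
    have := pow_div_factorial_le_exp _ hx₀.le 2
    rw [Nat.factorial_two, Nat.cast_two] at this
    calc exp (-(δ ^ 2 / (8 * τ))) = (exp (δ ^ 2 / (8 * τ)))⁻¹ := exp_neg _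
      _ ≤ ((δ ^ 2 / (8 * τ)) ^ 2 / 2)⁻¹ := inv_anti₀ (by positivity) this
      _ = 2 / (δ ^ 2 / (8 * τ)) ^ 2 := inv_div _ _
  have hsplit : exp (-δ ^ 2 / (4 * τ)) = exp (-(δ ^ 2 / (8 * τ))) * exp (-(δ ^ 2 / 8) / τ) := by
    rw [← exp_add]; congr 1; field_simp; ring
  have hpow : τ ^ (-(3 : ℝ) / 2) * τ ^ 2 = √τ := by
    rw [sqrt_eq_rpow, ← rpow_natCast, ← rpow_add hτ]; norm_num
  unfold heatR
  rw [mul_rpow (by positivity) hτ.le, hsplit]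
  calc (4 * π) ^ (-(3 : ℝ) / 2) * τ ^ (-(3 : ℝ) / 2)
        * (exp (-(δ ^ 2 / (8 * τ))) * exp (-(δ ^ 2 / 8) / τ))
      ≤ (4 * π) ^ (-(3 : ℝ) / 2) * τ ^ (-(3 : ℝ) / 2)
        * (2 / (δ ^ 2 / (8 * τ)) ^ 2 * exp (-(δ ^ 2 / 8) / τ)) := by
        gcongr
    _ = 128 * (4 * π) ^ (-(3 : ℝ) / 2) * (τ ^ (-(3 : ℝ) / 2) * τ ^ 2) / δ ^ 4
          * exp (-(δ ^ 2 / 8) / τ) := by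
        field_simp; ring
    _ ≤ 128 * (4 * π) ^ (-(3 : ℝ) / 2) * √T / δ ^ 4 * exp (-(δ ^ 2 / 8) / τ) := by
        rw [hpow]; gcongr

lemma integrableOn_closedBall_norm_rpow_neg {E : Type*} [NormedAddCommGroup E]
    [NormedSpace ℝ E] [FiniteDimensional ℝ E] [MeasurableSpace E] [BorelSpace E]
    (μ : Measure E) [μ.IsAddHaarMeasure] {α : ℝ} (hd : 1 ≤ Module.finrank ℝ E)
    (hα : α < Module.finrank ℝ E) (r : ℝ) :
    IntegrableOn (fun x : E => ‖x‖ ^ (-α)) (Metric.closedBall 0 r) μ :=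
  (locallyIntegrable_of_norm_le_rpow (C := 1) hd hα
    (ae_of_all _ fun x => by rw [norm_of_nonneg (rpow_nonneg (norm_nonneg x) _), one_mul])
    (measurable_norm.pow_const _).aestronglyMeasurable).integrableOn_isCompact
    (isCompact_closedBall 0 r)

lemma doobP_nonneg {T β s t : ℝ} (hβ : 0 ≤ β) (hst : s ≤ t) (x y : E3) :
    0 ≤ doobP T β s t x y := by
  unfold doobP
  split_ifs
  · rfl
  · have := Qbeta_nonneg hβ (T - t) y
    have := Qbeta_nonneg hβ (T - s) x
    have := Pbeta_nonneg hβ (sub_nonneg.2 hst) x y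
    positivity

lemma exists_doobP_le {T β ε δ : ℝ} (hT : 0 ≤ T) (hβ : 0 < β) (hε : 0 < ε) (hδ : 0 < δ) :
    ∃ K ≥ 0, ∀ s t, 0 ≤ s → s < t → t ≤ T → ∀ x y : E3, ε + δ ≤ ‖x‖ → ‖y‖ ≤ ε →
      doobP T β s t x y ≤ K * ‖y‖ ^ (-2 : ℝ) * heatR (t - s) δ := by
  have hπ := pi_pos
  set KQ := exp ((4 * π * β) ^ 2 * T) / (2 * π * β)
  set B := 2 * T + 16 * π * β * T * √(π * T) * exp ((4 * π * β) ^ 2 * T)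
  refine ⟨(ε + KQ) * (ε + B / δ), by positivity, fun s t hs hst htT x y hx hy => ?_⟩
  rcases eq_or_ne y 0 with rfl | hy₀
  · simp [doobP]
  have hy' := norm_pos_iff.2 hy₀
  set u := ‖y‖⁻¹
  have hεu : 1 ≤ ε * u := by rwa [← div_eq_mul_inv, one_le_div hy']
  have hQ : 1 + Qbeta β (T - t) y ≤ (ε + KQ) * u := by
    have := (Qbeta_le hβ (by linarith) (by linarith : T - t ≤ T) hy₀).trans_eq
      (by simp only [KQ, u, div_eq_mul_inv, mul_inv]; ring : _ = KQ * u)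
    linarith
  have hP : Pbeta β (t - s) x y ≤ (ε + B / δ) * u * heatR (t - s) δ := by
    refine (Pbeta_le hβ.le (sub_pos.2 hst) (by linarith : t - s ≤ T) hδ.le (by linarith)).trans
      (mul_le_mul_of_nonneg_right ?_ (heatR_nonneg_s16 (sub_nonneg.2 hst.le) δ))
    have : B / (‖x‖ * ‖y‖) ≤ B / δ * u := by
      rw [← div_div, div_eq_mul_inv (B / ‖x‖)]
      gcongr
      linarith
    linarith
  have hQy₀ := Qbeta_nonneg hβ.le (T - t) y
  have hQx₀ := Qbeta_nonneg hβ.le (T - s) x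
  have hP₀ := Pbeta_nonneg hβ.le (sub_nonneg.2 hst.le) x y
  have hu : ‖y‖ ^ (-2 : ℝ) = u ^ 2 := by rw [rpow_neg (norm_nonneg _), rpow_two, inv_pow]
  rw [doobP, if_neg hy₀]
  calc (1 + Qbeta β (T - t) y) / (1 + Qbeta β (T - s) x) * Pbeta β (t - s) x y
      ≤ (1 + Qbeta β (T - t) y) * Pbeta β (t - s) x y := by
        gcongr
        exact div_le_self (by linarith) (by linarith)
    _ ≤ (ε + KQ) * u * ((ε + B / δ) * u * heatR (t - s) δ) := by gcongr
    _ = (ε + KQ) * (ε + B / δ) * ‖y‖ ^ (-2 : ℝ) * heatR (t - s) δ := by rw [hu]; ring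

theorem one_step_boundary_avoidance (T β ε δ : ℝ)
    (hT : 0 < T) (hβ : 0 < β) (hε : 0 < ε) (hδ : 0 < δ) :
    ∃ C > 0, ∃ c > 0, ∀ s t : ℝ, 0 ≤ s → s < t → t ≤ T →
      ∀ x : E3, ε + δ ≤ ‖x‖ →
        (∫ y in {y : E3 | ‖y‖ ≤ ε}, doobP T β s t x y)
          ≤ C * Real.exp (-c / (t - s)) := by
  obtain ⟨K, hK, hdoob⟩ := exists_doobP_le hT.le hβ hε hδ
  have hball : {y : E3 | ‖y‖ ≤ ε} = Metric.closedBall 0 ε := by ext; simp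
  have hint : IntegrableOn (fun y : E3 => ‖y‖ ^ (-2 : ℝ)) {y : E3 | ‖y‖ ≤ ε} := by
    rw [hball]
    exact integrableOn_closedBall_norm_rpow_neg volume (by simp) (by simp; norm_num) ε
  set I := ∫ y in {y : E3 | ‖y‖ ≤ ε}, ‖y‖ ^ (-2 : ℝ)
  have hI : 0 ≤ I := setIntegral_nonneg (hball ▸ measurableSet_closedBall)
    fun y _ => rpow_nonneg (norm_nonneg y) _
  set L := 128 * (4 * π) ^ (-(3 : ℝ) / 2) * √T / δ ^ 4
  have hL : 0 ≤ L := by positivity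
  refine ⟨K * I * L + 1, by positivity, δ ^ 2 / 8, by positivity,
    fun s t hs hst htT x hx => ?_⟩
  calc ∫ y in {y : E3 | ‖y‖ ≤ ε}, doobP T β s t x y
      ≤ ∫ y in {y : E3 | ‖y‖ ≤ ε}, K * ‖y‖ ^ (-2 : ℝ) * heatR (t - s) δ :=
        integral_mono_of_nonneg (ae_of_all _ (doobP_nonneg hβ.le hst.le x))
          ((hint.const_mul K).mul_const _)
          ((ae_restrict_iff' (hball ▸ measurableSet_closedBall)).2
            (ae_of_all _ fun y hy => hdoob s t hs hst htT x y hx hy))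
    _ = K * I * heatR (t - s) δ := by rw [integral_mul_const, integral_const_mul]
    _ ≤ K * I * (L * exp (-(δ ^ 2 / 8) / (t - s))) :=
        mul_le_mul_of_nonneg_left
          (heatR_le_mul_exp_neg_div hδ (sub_pos.2 hst) (by linarith : t - s ≤ T)) (mul_nonneg hK hI)
    _ ≤ (K * I * L + 1) * exp (-(δ ^ 2 / 8) / (t - s)) := by
        rw [← mul_assoc]
        gcongr
        linarith

end
end
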